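/- Let G be the semidirect product Λ ⋊ ℤ/2 with Λ ≅ ℤⁿ and ℤ/2 acting by −id. There is exactly one nontrivial group homomorphism φ : G → ℚ/ℤ that vanishes on all elements of infinite order, namely the projection to ℤ/2 followed by the inclusion ℤ/2 ↪ ℚ/ℤ. -/

import Mathlib

open SemidirectProduct

/-- The negation automorphism of a commutative group (written multiplicatively). -/
def negAut (Λ : Type*) [CommGroup Λ] : MulAut Λ := MulEquiv.inv Λ

/-- The action of `ℤ/2` on a commutative group `Λ` in which the nontrivial element
acts by inversion (i.e. by `-id` in additive notation). -/
def negAct (Λ : Type*) [CommGroup Λ] : Multiplicative (ZMod 2) →* MulAut Λ where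
  toFun ε := if Multiplicative.toAdd ε = 0 then 1 else negAut Λ
  map_one' := by simp
  map_mul' a b := by
    have key : ∀ x : ZMod 2, x = 0 ∨ x = 1 := by decide
    have hsq : negAut Λ * negAut Λ = 1 := by
      ext x; simp [negAut]
    rcases key (Multiplicative.toAdd a) with h1 | h1 <;>
      rcases key (Multiplicative.toAdd b) with h2 | h2 <;>
        simp [toAdd_mul, h1, h2, hsq, show (1 : ZMod 2) + 1 = 0 by decide]

/-- `Λ ⋊ ℤ/2`, with `ℤ/2` acting by `-id`, for `Λ` free abelian of rank `n`. -/
abbrev SD (n : ℕ) :=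
  Multiplicative (Fin n → ℤ) ⋊[negAct (Multiplicative (Fin n → ℤ))] Multiplicative (ZMod 2)


/-- `ℚ/ℤ`. -/
abbrev QZ := AddCircle (1 : ℚ)

lemma half_add_half : ((2⁻¹ : ℚ) : QZ) + ((2⁻¹ : ℚ) : QZ) = 0 := by
  have h : (2⁻¹ : ℚ) + (2⁻¹ : ℚ) = 1 := by norm_num
  rw [← AddCircle.coe_add, h]
  exact AddCircle.coe_period (1 : ℚ)

/-- The projection `Λ ⋊ ℤ/2 → ℤ/2` followed by the inclusion `ℤ/2 ↪ ℚ/ℤ`, `1 ↦ 1/2`. -/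
def projQZ (n : ℕ) : SD n →* Multiplicative QZ where
  toFun g := Multiplicative.ofAdd
    (if Multiplicative.toAdd (SemidirectProduct.rightHom g) = 0 then 0 else ((1/2 : ℚ) : QZ))
  map_one' := by simp
  map_mul' a b := by
    have key : ∀ x : Multiplicative (ZMod 2), x = 1 ∨ x = Multiplicative.ofAdd 1 := by decide
    rcases key a.right with h1 | h1 <;> rcases key b.right with h2 | h2 <;>
      simp [h1, h2, half_add_half, ← ofAdd_add,
        show (Multiplicative.ofAdd (1 : ZMod 2)) ≠ 1 by decide,
        show Multiplicative.ofAdd (1 : ZMod 2) * Multiplicative.ofAdd (1 : ZMod 2) = 1 by decide]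

/-! An element of `Λ ⋊ ℤ/2` outside `Λ` squares to `1`, because the involution inverts `Λ`;
so, `Λ` being torsion-free, the elements of infinite order are exactly those of `Λ \ {1}`.
A homomorphism to `ℚ/ℤ` vanishing on them factors through `ℤ/2`, and is determined by the image
of the generator, a `2`-torsion point of `ℚ/ℤ`: either `0` or `1/2`. -/

namespace AddCircle

variable {𝕜 : Type*} [Field 𝕜] [LinearOrder 𝕜] [IsStrictOrderedRing 𝕜] {p : 𝕜} [Fact (0 < p)]

theorem coe_half_period_ne_zero : ((p / 2 : 𝕜) : AddCircle p) ≠ 0 := by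
  intro h
  have := addOrderOf_period_div (p := p) two_pos
  rw [Nat.cast_ofNat, h, addOrderOf_zero] at this
  exact absurd this (by norm_num)

theorem eq_zero_or_eq_half_period_of_add_self_eq_zero {c : AddCircle p} (h : c + c = 0) :
    c = 0 ∨ c = ((p / 2 : 𝕜) : AddCircle p) := by
  obtain ⟨m, hm, rfl⟩ := (AddCircle.nsmul_eq_zero_iff (u := c) two_pos).mp (by rwa [two_nsmul])
  interval_cases m
  · simp
  · exact .inr (by push_cast; ring_nf)

end AddCircle

instance : Fact ((0 : ℚ) < 1) := ⟨one_pos⟩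

theorem QZ.eq_one_or_eq_half_of_mul_self_eq_one {c : Multiplicative QZ} (h : c * c = 1) :
    c = 1 ∨ c = Multiplicative.ofAdd ((1 / 2 : ℚ) : QZ) :=
  AddCircle.eq_zero_or_eq_half_period_of_add_self_eq_zero h

namespace ZMod

theorem multiplicative_two_eq_one_or_eq_ofAdd_one (x : Multiplicative (ZMod 2)) :
    x = 1 ∨ x = Multiplicative.ofAdd 1 := by
  decide +revert

theorem ofAdd_one_mul_ofAdd_one :
    Multiplicative.ofAdd (1 : ZMod 2) * Multiplicative.ofAdd 1 = 1 := by
  decide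

end ZMod

namespace SemidirectProduct

variable {Λ M : Type*} [CommGroup Λ] [Group M]

local notation "G" => Λ ⋊[negAct Λ] Multiplicative (ZMod 2)

theorem negAct_ofAdd_one_apply (l : Λ) : negAct Λ (Multiplicative.ofAdd 1) l = l⁻¹ := by
  simp [negAct, negAut]

theorem mul_self_eq_one_of_right_ne_one {g : G} (h : g.right ≠ 1) : g * g = 1 := by
  have hr := (ZMod.multiplicative_two_eq_one_or_eq_ofAdd_one g.right).resolve_left h
  ext
  · simp [hr, negAct_ofAdd_one_apply]
  · simp [hr, ZMod.ofAdd_one_mul_ofAdd_one]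

theorem right_eq_one_of_not_isOfFinOrder {g : G} (hg : ¬IsOfFinOrder g) : g.right = 1 := by
  by_contra h
  exact hg <| isOfFinOrder_iff_pow_eq_one.mpr
    ⟨2, two_pos, by rw [sq, mul_self_eq_one_of_right_ne_one h]⟩

theorem comp_inl_eq_one_of_forall_not_isOfFinOrder [IsMulTorsionFree Λ] {φ : G →* M}
    (hφ : ∀ g, ¬IsOfFinOrder g → φ g = 1) : φ.comp inl = 1 := by
  ext l
  obtain rfl | hl := eq_or_ne l 1
  · simp
  · exact hφ _ (inl_injective.isOfFinOrder_iff.not.mpr (not_isOfFinOrder_of_isMulTorsionFree hl))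

theorem hom_ext_of_comp_inl_eq_one {φ ψ : G →* M} (hφ : φ.comp inl = 1) (hψ : ψ.comp inl = 1)
    (h : φ (inr (Multiplicative.ofAdd 1)) = ψ (inr (Multiplicative.ofAdd 1))) : φ = ψ := by
  refine hom_ext (hφ.trans hψ.symm) (MonoidHom.ext fun t => ?_)
  obtain rfl | rfl := ZMod.multiplicative_two_eq_one_or_eq_ofAdd_one t
  · simp
  · exact h

end SemidirectProduct

theorem projQZ_comp_inl (n : ℕ) : (projQZ n).comp inl = 1 := by
  ext l
  simp [projQZ]

theorem projQZ_inr_ofAdd_one (n : ℕ) :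
    projQZ n (inr (Multiplicative.ofAdd 1)) = Multiplicative.ofAdd ((1 / 2 : ℚ) : QZ) := by
  simp [projQZ]

theorem unique_hom_vanishing_on_infinite_order_general (n : ℕ) :
    (projQZ n ≠ 1 ∧ ∀ g : SD n, ¬ IsOfFinOrder g → projQZ n g = 1) ∧
    ∀ φ : SD n →* Multiplicative QZ,
      φ ≠ 1 → (∀ g : SD n, ¬ IsOfFinOrder g → φ g = 1) → φ = projQZ n := by
  refine ⟨⟨fun h => ?_, fun g hg => ?_⟩, fun φ hφ hvan => ?_⟩
  · have hgen := projQZ_inr_ofAdd_one n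
    rw [h] at hgen
    exact AddCircle.coe_half_period_ne_zero (congrArg Multiplicative.toAdd hgen).symm
  · simp [projQZ, right_eq_one_of_not_isOfFinOrder hg]
  · have hinl := comp_inl_eq_one_of_forall_not_isOfFinOrder hvan
    have hsq : φ (inr (Multiplicative.ofAdd 1)) * φ (inr (Multiplicative.ofAdd 1)) = 1 := by
      rw [← map_mul, ← map_mul, ZMod.ofAdd_one_mul_ofAdd_one, map_one, map_one]
    obtain h1 | hhalf := QZ.eq_one_or_eq_half_of_mul_self_eq_one hsq
    · exact absurd (hom_ext_of_comp_inl_eq_one hinl (MonoidHom.one_comp _) h1) hφ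
    · exact hom_ext_of_comp_inl_eq_one hinl (projQZ_comp_inl n)
        (hhalf.trans (projQZ_inr_ofAdd_one n).symm)

/-- In `G = Λ ⋊ ℤ/2` with `Λ ≅ ℤⁿ` and `ℤ/2` acting by `-id`, there is exactly one
nontrivial homomorphism `G → ℚ/ℤ` vanishing on all elements of infinite order,
namely the projection to `ℤ/2` followed by the inclusion `ℤ/2 ↪ ℚ/ℤ`. -/
theorem unique_hom_vanishing_on_infinite_order (n : ℕ) (hn : 1 ≤ n) :
    (projQZ n ≠ 1 ∧ ∀ g : SD n, ¬ IsOfFinOrder g → projQZ n g = 1) ∧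
    ∀ φ : SD n →* Multiplicative QZ,
      φ ≠ 1 → (∀ g : SD n, ¬ IsOfFinOrder g → φ g = 1) → φ = projQZ n :=
  unique_hom_vanishing_on_infinite_order_general n
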